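/- arXiv:1808.10292 — 4 statements merged into one kernel-verified Lean document; each statement's English description precedes it below -/
import Mathlib

section
/- For every i with 1 ≤ i ≤ p−1, the number of key positions holding a key not larger than the i·s-th smallest sample key is at least i·s·x; that is, |{(k, q) ∈ Fin p × Fin (s·x) : K k q ≤ t_{i·s}}| ≥ i·s·x. -/
/-! The `i·s` smallest samples are each the last key of some segment, and a segment whose last key
is at most `t_{i·s}` lies entirely below `t_{i·s}` because its sequence is sorted. Hence at least
`i·s` whole segments, i.e. `i·s·x` key positions, lie below `t_{i·s}`. -/

private lemma idx_lt {a b : ℕ} (ha : 1 ≤ a) (hab : a ≤ b) : a - 1 < b := by omega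

open Finset

section

variable {α : Type*} [LinearOrder α]

theorem Monotone.val_add_one_le_card_filter_le {n : ℕ} {t : Fin n → α} (ht : Monotone t)
    (m : Fin n) : (m : ℕ) + 1 ≤ #{j | t j ≤ t m} := by
  rw [← Fin.card_Iic]
  exact card_le_card fun j hj => mem_filter.2 ⟨mem_univ j, ht (mem_Iic.1 hj)⟩

theorem card_filter_eq_of_univ_val_map_eq {β ι κ : Type*} [Fintype ι] [Fintype κ]
    {f : ι → β} {g : κ → β} (h : univ.val.map f = univ.val.map g) (P : β → Prop)
    [DecidablePred P] : #{i | P (f i)} = #{j | P (g j)} := by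
  have hcount := congrArg (fun m => Multiset.card (m.filter P)) h
  simpa only [card_def, filter_val, Multiset.filter_map, Multiset.card_map, Function.comp_def]
    using hcount

def segmentLast {s x : ℕ} (hx : 0 < x) (j : Fin s) : Fin (s * x) :=
  ⟨((j : ℕ) + 1) * x - 1,
    idx_lt (Nat.mul_pos (Nat.succ_pos _) hx) (Nat.mul_le_mul j.isLt (le_refl x))⟩

theorem finProdFinEquiv_le_segmentLast {s x : ℕ} (hx : 0 < x) (j : Fin s) (r : Fin x) :
    finProdFinEquiv (j, r) ≤ segmentLast hx j := by
  have hr := r.isLt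
  simp only [Fin.le_def, finProdFinEquiv_apply_val, segmentLast, Nat.add_one_mul, Nat.mul_comm x]
  omega

theorem card_filter_segmentLast_le_mul_le {ι : Type*} [Fintype ι] {s x : ℕ} (hx : 0 < x)
    {K : ι → Fin (s * x) → α} (hK : ∀ k, Monotone (K k)) (τ : α) :
    #{kj : ι × Fin s | K kj.1 (segmentLast hx kj.2) ≤ τ} * x ≤
      #{kq : ι × Fin (s * x) | K kq.1 kq.2 ≤ τ} := by
  let spread : (ι × Fin s) × Fin x ≃ ι × Fin (s * x) :=
    (Equiv.prodAssoc _ _ _).trans ((Equiv.refl ι).prodCongr finProdFinEquiv)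
  have hmaps : ∀ kjr ∈ ({kj : ι × Fin s | K kj.1 (segmentLast hx kj.2) ≤ τ} : Finset _) ×ˢ univ,
      spread kjr ∈ ({kq : ι × Fin (s * x) | K kq.1 kq.2 ≤ τ} : Finset _) := by
    rintro ⟨⟨k, j⟩, r⟩ hmem
    simp only [mem_product, mem_filter, mem_univ, true_and, and_true] at hmem ⊢
    exact (hK k (finProdFinEquiv_le_segmentLast hx j r)).trans hmem
  simpa using card_le_card_of_injOn spread hmaps spread.injective.injOn

end

theorem stmt_0_general
    (p s x : ℕ) (hs : 0 < s) (hx : 0 < x)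
    (α : Type*) [LinearOrder α]
    (K : Fin p → Fin (s * x) → α)
    (hK : ∀ k : Fin p, Monotone (K k))
    (t : Fin (p * s) → α)
    (ht : Monotone t)
    (hsample :
      (↑(List.ofFn t) : Multiset α) =
        Multiset.map
          (fun kj : Fin p × Fin s =>
            K kj.1
              ⟨((kj.2 : ℕ) + 1) * x - 1,
                idx_lt (Nat.mul_pos (Nat.succ_pos _) hx)
                  (Nat.mul_le_mul kj.2.isLt (le_refl x))⟩)
          Finset.univ.val) :
    ∀ i : ℕ, ∀ (hi1 : 1 ≤ i) (hi2 : i ≤ p - 1),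
      i * s * x ≤
        (Finset.univ.filter
          (fun kq : Fin p × Fin (s * x) =>
            K kq.1 kq.2 ≤
              t ⟨i * s - 1,
                idx_lt (Nat.mul_pos hi1 hs)
                  (Nat.mul_le_mul (le_trans hi2 (Nat.sub_le p 1)) (le_refl s))⟩)).card := by
  intro i hi1 hi2
  set m : Fin (p * s) := ⟨i * s - 1,
    idx_lt (Nat.mul_pos hi1 hs) (Nat.mul_le_mul (le_trans hi2 (Nat.sub_le p 1)) (le_refl s))⟩
  have hsamplesBelow : i * s ≤ #{j | t j ≤ t m} := by
    have hm : (m : ℕ) + 1 = i * s := Nat.sub_add_cancel (Nat.mul_pos hi1 hs)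
    exact hm ▸ ht.val_add_one_le_card_filter_le m
  have hsegmentsBelow : #{j | t j ≤ t m} =
      #{kj : Fin p × Fin s | K kj.1 (segmentLast hx kj.2) ≤ t m} :=
    card_filter_eq_of_univ_val_map_eq (by rw [Fin.univ_val_map]; exact hsample) (· ≤ t m)
  calc i * s * x ≤ #{kj : Fin p × Fin s | K kj.1 (segmentLast hx kj.2) ≤ t m} * x := by
        rw [← hsegmentsBelow]; exact Nat.mul_le_mul_right x hsamplesBelow
    _ ≤ _ := card_filter_segmentLast_le_mul_le hx hK (t m)

/-- In the regular oversampling setup, for every `i` with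
`1 ≤ i ≤ p - 1`, at least `i * s * x` key positions hold a key not larger than
the `i·s`-th smallest sample key. -/
theorem stmt_0
    (p s x : ℕ) (hp : 0 < p) (hs : 0 < s) (hx : 0 < x)
    (α : Type*) [LinearOrder α]
    (K : Fin p → Fin (s * x) → α)
    (hK : ∀ k : Fin p, Monotone (K k))
    (t : Fin (p * s) → α)
    (ht : Monotone t)
    (hsample :
      (↑(List.ofFn t) : Multiset α) =
        Multiset.map
          (fun kj : Fin p × Fin s =>
            K kj.1
              ⟨((kj.2 : ℕ) + 1) * x - 1,
                idx_lt (Nat.mul_pos (Nat.succ_pos _) hx)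
                  (Nat.mul_le_mul kj.2.isLt (le_refl x))⟩)
          Finset.univ.val) :
    ∀ i : ℕ, ∀ (hi1 : 1 ≤ i) (hi2 : i ≤ p - 1),
      i * s * x ≤
        (Finset.univ.filter
          (fun kq : Fin p × Fin (s * x) =>
            K kq.1 kq.2 ≤
              t ⟨i * s - 1,
                idx_lt (Nat.mul_pos hi1 hs)
                  (Nat.mul_le_mul (le_trans hi2 (Nat.sub_le p 1)) (le_refl s))⟩)).card :=
  stmt_0_general p s x hs hx α K hK t ht hsample
end

section
/- For every i with 1 ≤ i ≤ p−1, the number of key positions holding a key not smaller than the i·s-th smallest sample key is at least (p·s − i·s − p + 1)·x; that is, |{(k, q) ∈ Fin p × Fin (s·x) : K k q ≥ t_{i·s}}| ≥ (p·s − i·s − p + 1)·x. -/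
open Finset

def segmentEnd {s x : ℕ} (hx : 0 < x) (j : Fin s) : Fin (s * x) :=
  ⟨((j : ℕ) + 1) * x - 1, idx_lt (Nat.mul_pos (Nat.succ_pos _) hx) (Nat.mul_le_mul j.isLt le_rfl)⟩

section Monotone

variable {α : Type*} [LinearOrder α] {n : ℕ} {f : Fin n → α}

theorem Monotone.card_filter_lt_le (hf : Monotone f) {T : α} {a : Fin n} (ha : T ≤ f a) :
    #{q | f q < T} ≤ a := by
  calc #{q | f q < T} ≤ #(Iio a) := by
        refine card_le_card fun q hq => mem_Iio.2 (lt_of_not_ge fun haq => ?_)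
        exact (mem_filter.1 hq).2.not_ge (ha.trans (hf haq))
    _ = a := Fin.card_Iio a

theorem Monotone.lt_of_val_lt_card_filter_lt (hf : Monotone f) {T : α} {q : Fin n}
    (hq : (q : ℕ) < #{r | f r < T}) : f q < T :=
  lt_of_not_ge fun h => (hf.card_filter_lt_le h).not_gt hq

theorem Monotone.card_filter_lt_le_segmentEnd {s x : ℕ} (hx : 0 < x)
    {f : Fin (s * x) → α} (hf : Monotone f) (T : α) :
    #{q | f q < T} ≤ #{j : Fin s | f (segmentEnd hx j) < T} * x + (x - 1) := by
  obtain ⟨m, hm_def⟩ : ∃ m, #{q | f q < T} = m := ⟨_, rfl⟩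
  have hm : m ≤ s * x := hm_def ▸ (card_filter_le _ _).trans_eq (card_fin _)
  -- the keys below `T` form a prefix of length `m`, so every segment ending inside it ends below `T`
  have hdiv : m / x ≤ #{j : Fin s | f (segmentEnd hx j) < T} := by
    have hms : m / x ≤ s := Nat.div_le_of_le_mul (by rwa [mul_comm])
    calc m / x = #(univ : Finset (Fin (m / x))) := (card_fin _).symm
      _ ≤ _ := by
        refine card_le_card_of_injOn (Fin.castLE hms) (fun j _ => ?_)
          (Fin.castLE_injective hms).injOn
        refine mem_filter.2 ⟨mem_univ _, hf.lt_of_val_lt_card_filter_lt ?_⟩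
        rw [hm_def]
        calc ((j : ℕ) + 1) * x - 1 < ((j : ℕ) + 1) * x := Nat.sub_one_lt_of_lt (by positivity)
          _ ≤ m / x * x := Nat.mul_le_mul_right x j.isLt
          _ ≤ m := Nat.div_mul_le_self m x
  have := Nat.lt_div_mul_add (a := m) hx
  have := Nat.mul_le_mul_right x hdiv
  rw [hm_def]
  omega

end Monotone

theorem card_filter_prod_lt_le_segmentEnd {ι α : Type*} [Fintype ι] [LinearOrder α] {s x : ℕ}
    (hx : 0 < x) {K : ι → Fin (s * x) → α} (hK : ∀ k, Monotone (K k)) (T : α) :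
    #{kq : ι × Fin (s * x) | K kq.1 kq.2 < T} ≤
      #{kj : ι × Fin s | K kj.1 (segmentEnd hx kj.2) < T} * x + Fintype.card ι * (x - 1) := by
  calc #{kq : ι × Fin (s * x) | K kq.1 kq.2 < T} = ∑ k, #{q | K k q < T} := by
        simp only [card_filter, Fintype.sum_prod_type]
    _ ≤ ∑ k, (#{j : Fin s | K k (segmentEnd hx j) < T} * x + (x - 1)) :=
        sum_le_sum fun k _ => (hK k).card_filter_lt_le_segmentEnd hx T
    _ = (∑ k, #{j : Fin s | K k (segmentEnd hx j) < T}) * x + Fintype.card ι * (x - 1) := by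
        rw [sum_add_distrib, sum_mul, sum_const, card_univ, smul_eq_mul]
    _ = _ := by simp only [card_filter, Fintype.sum_prod_type]

theorem stmt_1_general
    (p s x : ℕ) (hs : 0 < s) (hx : 0 < x)
    (α : Type*) [LinearOrder α]
    (K : Fin p → Fin (s * x) → α)
    (hK : ∀ k : Fin p, Monotone (K k))
    (t : Fin (p * s) → α)
    (ht : Monotone t)
    (hsample :
      (↑(List.ofFn t) : Multiset α) =
        Multiset.map
          (fun kj : Fin p × Fin s =>
            K kj.1
              ⟨((kj.2 : ℕ) + 1) * x - 1,
                idx_lt (Nat.mul_pos (Nat.succ_pos _) hx)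
                  (Nat.mul_le_mul kj.2.isLt (le_refl x))⟩)
          Finset.univ.val) :
    ∀ i : ℕ, ∀ (hi1 : 1 ≤ i) (hi2 : i ≤ p - 1),
      ((p : ℤ) * s - i * s - p + 1) * x ≤
        ((Finset.univ.filter
          (fun kq : Fin p × Fin (s * x) =>
            t ⟨i * s - 1,
                idx_lt (Nat.mul_pos hi1 hs)
                  (Nat.mul_le_mul (le_trans hi2 (Nat.sub_le p 1)) (le_refl s))⟩ ≤
              K kq.1 kq.2)).card : ℤ) := by
  intro i hi1 hi2
  set T := t ⟨i * s - 1, _⟩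
  have hsamples : #{j | t j < T} = #{kj : Fin p × Fin s | K kj.1 (segmentEnd hx kj.2) < T} := by
    have := congrArg (Multiset.countP (· < T)) hsample
    rw [← Fin.univ_val_map, Multiset.countP_map, Multiset.countP_map] at this
    exact this
  have hsamples_le : #{kj : Fin p × Fin s | K kj.1 (segmentEnd hx kj.2) < T} ≤ i * s - 1 :=
    hsamples ▸ ht.card_filter_lt_le le_rfl
  have hbelow := (card_filter_prod_lt_le_segmentEnd hx hK T).trans
    (Nat.add_le_add_right (Nat.mul_le_mul_right x hsamples_le) _)
  have hsplit := card_filter_add_card_filter_not (s := (univ : Finset (Fin p × Fin (s * x))))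
    (fun kq => T ≤ K kq.1 kq.2)
  simp only [not_le, card_univ, Fintype.card_prod, Fintype.card_fin] at hsplit hbelow
  have his : 1 ≤ i * s := Nat.mul_pos hi1 hs
  zify [his, hx] at hsplit hbelow
  linarith

/-- In the regular oversampling setup, for every `i` with
`1 ≤ i ≤ p - 1`, at least `(p*s - i*s - p + 1) * x` key positions hold a key
not smaller than the `i·s`-th smallest sample key. -/
theorem stmt_1
    (p s x : ℕ) (hp : 0 < p) (hs : 0 < s) (hx : 0 < x)
    (α : Type*) [LinearOrder α]
    (K : Fin p → Fin (s * x) → α)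
    (hK : ∀ k : Fin p, Monotone (K k))
    (t : Fin (p * s) → α)
    (ht : Monotone t)
    (hsample :
      (↑(List.ofFn t) : Multiset α) =
        Multiset.map
          (fun kj : Fin p × Fin s =>
            K kj.1
              ⟨((kj.2 : ℕ) + 1) * x - 1,
                idx_lt (Nat.mul_pos (Nat.succ_pos _) hx)
                  (Nat.mul_le_mul kj.2.isLt (le_refl x))⟩)
          Finset.univ.val) :
    ∀ i : ℕ, ∀ (hi1 : 1 ≤ i) (hi2 : i ≤ p - 1),
      ((p : ℤ) * s - i * s - p + 1) * x ≤
        ((Finset.univ.filter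
          (fun kq : Fin p × Fin (s * x) =>
            t ⟨i * s - 1,
                idx_lt (Nat.mul_pos hi1 hs)
                  (Nat.mul_le_mul (le_trans hi2 (Nat.sub_le p 1)) (le_refl s))⟩ ≤
              K kq.1 kq.2)).card : ℤ) :=
  stmt_1_general p s x hs hx α K hK t ht hsample
end

section
/- Each of the p buckets induced by the p−1 splitters t_s, t_{2s}, …, t_{(p−1)s} contains at most (s + p − 1)·x keys. Precisely: |{(k,q) : K k q < t_s}| ≤ (s+p−1)·x; for every j with 1 ≤ j ≤ p−2, |{(k,q) : t_{j·s} < K k q < t_{(j+1)·s}}| ≤ (s+p−1)·x; and |{(k,q) : K k q > t_{(p−1)·s}}| ≤ (s+p−1)·x. In particular the maximum bucket size is bounded independently of the bucket index j. -/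
private lemma pos_lt {s x : ℕ} (hx : 0 < x) (j : Fin s) : ((j : ℕ) + 1) * x - 1 < s * x :=
  idx_lt (Nat.mul_pos (Nat.succ_pos _) hx) (Nat.mul_le_mul j.isLt (le_refl x))

private lemma downClosed_mem_iff {n : ℕ} (S : Finset (Fin n))
    (h : ∀ a b : Fin n, a ≤ b → b ∈ S → a ∈ S) (q : Fin n) :
    q ∈ S ↔ (q : ℕ) < S.card := by
  constructor
  · intro hq
    have hsub : Finset.Iic q ⊆ S := fun a ha => h a q (Finset.mem_Iic.mp ha) hq
    have := Finset.card_le_card hsub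
    rw [Fin.card_Iic] at this
    omega
  · intro hq
    by_contra hq'
    have hsub : S ⊆ Finset.Iio q := by
      intro b hb
      rw [Finset.mem_Iio]
      by_contra hb'
      exact hq' (h q b (not_lt.mp hb') hb)
    have := Finset.card_le_card hsub
    rw [Fin.card_Iio] at this
    omega

private lemma count_sample_eq {N p s : ℕ} {α : Type*} (t : Fin N → α) (g : Fin p × Fin s → α)
    (h : (↑(List.ofFn t) : Multiset α) = Multiset.map g Finset.univ.val)
    (P : α → Prop) [DecidablePred P] :
    (Finset.univ.filter fun i => P (t i)).card =
      (Finset.univ.filter fun kj => P (g kj)).card := by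
  have h2 := congrArg (Multiset.countP P) h
  rw [← Fin.univ_val_map, Multiset.countP_map, Multiset.countP_map] at h2
  rw [Finset.card, Finset.filter_val, Finset.card, Finset.filter_val]
  exact h2

private lemma card_filter_prod {p n : ℕ} (P : Fin p → Fin n → Prop) [∀ k q, Decidable (P k q)] :
    (Finset.univ.filter fun kq : Fin p × Fin n => P kq.1 kq.2).card
      = ∑ k, (Finset.univ.filter fun q => P k q).card := by
  rw [Finset.card_filter, Fintype.sum_prod_type]
  exact Finset.sum_congr rfl fun k _ => (Finset.card_filter _ _).symm

/-- keys of one sorted sequence below a threshold: at most `x * (#samples below) + (x-1)`. -/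
private lemma count_lt_le {s x : ℕ} (hx : 0 < x) {α : Type*} [LinearOrder α]
    (f : Fin (s * x) → α) (hf : Monotone f) (T : α) :
    (Finset.univ.filter fun q => f q < T).card ≤
      x * (Finset.univ.filter
        fun j : Fin s => f ⟨((j : ℕ) + 1) * x - 1, pos_lt hx j⟩ < T).card + (x - 1) := by
  set S := Finset.univ.filter fun q : Fin (s * x) => f q < T with hS
  set m := (Finset.univ.filter
      fun j : Fin s => f ⟨((j : ℕ) + 1) * x - 1, pos_lt hx j⟩ < T).card with hm
  have hdc : ∀ a b : Fin (s * x), a ≤ b → b ∈ S → a ∈ S := by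
    intro a b hab hb
    simp only [hS, Finset.mem_filter, Finset.mem_univ, true_and] at hb ⊢
    exact lt_of_le_of_lt (hf hab) hb
  by_contra hcon
  push_neg at hcon
  have hc : x * m + x ≤ S.card := by omega
  have hcard : S.card ≤ s * x := by
    have := Finset.card_le_univ S
    simpa using this
  have hms : m + 1 ≤ s := by
    have e1 : x * (m + 1) = x * m + x := by ring
    have e2 : s * x = x * s := by ring
    have : x * (m + 1) ≤ x * s := by omega
    exact Nat.le_of_mul_le_mul_left this hx
  have hsub : Finset.Iic (⟨m, by omega⟩ : Fin s) ⊆ Finset.univ.filter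
      (fun j : Fin s => f ⟨((j : ℕ) + 1) * x - 1, pos_lt hx j⟩ < T) := by
    intro j hj
    have hjm : (j : ℕ) ≤ m := Fin.le_def.mp (Finset.mem_Iic.mp hj)
    simp only [Finset.mem_filter, Finset.mem_univ, true_and]
    have hlt : ((j : ℕ) + 1) * x - 1 < S.card := by
      have h1 : ((j : ℕ) + 1) * x ≤ (m + 1) * x := Nat.mul_le_mul_right x (by omega)
      have h2 : (m + 1) * x = x * m + x := by ring
      have h3 : 1 ≤ ((j : ℕ) + 1) * x := Nat.mul_pos (Nat.succ_pos _) hx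
      omega
    have := (downClosed_mem_iff S hdc ⟨((j : ℕ) + 1) * x - 1, pos_lt hx j⟩).mpr hlt
    simpa [hS] using this
  have hcard2 := Finset.card_le_card hsub
  rw [Fin.card_Iic] at hcard2
  simp only [← hm] at hcard2
  omega

/-- keys of one sorted sequence at most a threshold: at least `x * (#samples ≤ threshold)`. -/
private lemma count_le_ge {s x : ℕ} (hx : 0 < x) {α : Type*} [LinearOrder α]
    (f : Fin (s * x) → α) (hf : Monotone f) (T : α) :
    x * (Finset.univ.filter
        fun j : Fin s => f ⟨((j : ℕ) + 1) * x - 1, pos_lt hx j⟩ ≤ T).card ≤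
      (Finset.univ.filter fun q => f q ≤ T).card := by
  set M := Finset.univ.filter
    (fun j : Fin s => f ⟨((j : ℕ) + 1) * x - 1, pos_lt hx j⟩ ≤ T) with hM
  set S := Finset.univ.filter fun q : Fin (s * x) => f q ≤ T with hS
  rcases Nat.eq_zero_or_pos M.card with h0 | h1
  · simp [h0]
  have hdcS : ∀ a b : Fin (s * x), a ≤ b → b ∈ S → a ∈ S := by
    intro a b hab hb
    simp only [hS, Finset.mem_filter, Finset.mem_univ, true_and] at hb ⊢
    exact le_trans (hf hab) hb
  have hdcM : ∀ a b : Fin s, a ≤ b → b ∈ M → a ∈ M := by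
    intro a b hab hb
    simp only [hM, Finset.mem_filter, Finset.mem_univ, true_and] at hb ⊢
    refine le_trans (hf ?_) hb
    show ((a : ℕ) + 1) * x - 1 ≤ ((b : ℕ) + 1) * x - 1
    have : ((a : ℕ) + 1) * x ≤ ((b : ℕ) + 1) * x :=
      Nat.mul_le_mul_right x (by exact_mod_cast Nat.succ_le_succ hab)
    omega
  have hMs : M.card ≤ s := by
    have := Finset.card_le_univ M
    simpa using this
  have hmem : (⟨M.card - 1, by omega⟩ : Fin s) ∈ M :=
    (downClosed_mem_iff M hdcM _).mpr (by simpa using Nat.sub_lt h1 one_pos)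
  simp only [hM, Finset.mem_filter, Finset.mem_univ, true_and] at hmem
  have hval : ((M.card - 1 : ℕ) + 1) * x - 1 = M.card * x - 1 := by
    have : M.card - 1 + 1 = M.card := by omega
    rw [this]
  have hmemS : (⟨M.card * x - 1, by
      have := pos_lt hx (⟨M.card - 1, by omega⟩ : Fin s); simpa [hval] using this⟩ :
      Fin (s * x)) ∈ S := by
    simp only [hS, Finset.mem_filter, Finset.mem_univ, true_and]
    convert hmem using 2
    exact (Fin.ext hval.symm)
  have := (downClosed_mem_iff S hdcS _).mp hmemS
  simp only at this
  have e1 : x * M.card = M.card * x := by ring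
  have e2 : 1 ≤ M.card * x := Nat.mul_pos h1 hx
  omega

private lemma count_t_lt {n : ℕ} {α : Type*} [LinearOrder α] (t : Fin n → α) (ht : Monotone t)
    (I : Fin n) :
    (Finset.univ.filter fun i => t i < t I).card ≤ (I : ℕ) := by
  have hsub : (Finset.univ.filter fun i => t i < t I) ⊆ Finset.Iio I := by
    intro i hi
    simp only [Finset.mem_filter, Finset.mem_univ, true_and] at hi
    rw [Finset.mem_Iio]
    by_contra h
    exact absurd (ht (not_lt.mp h)) (not_le.mpr hi)
  have := Finset.card_le_card hsub
  rwa [Fin.card_Iio] at this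

private lemma count_t_le {n : ℕ} {α : Type*} [LinearOrder α] (t : Fin n → α) (ht : Monotone t)
    (I : Fin n) :
    (I : ℕ) + 1 ≤ (Finset.univ.filter fun i => t i ≤ t I).card := by
  have hsub : Finset.Iic I ⊆ (Finset.univ.filter fun i => t i ≤ t I) := by
    intro i hi
    simp only [Finset.mem_filter, Finset.mem_univ, true_and]
    exact ht (Finset.mem_Iic.mp hi)
  have := Finset.card_le_card hsub
  rwa [Fin.card_Iic] at this

private lemma final_bound {p s x : ℕ} (hp : 2 ≤ p) (hs : 0 < s) (hx : 0 < x) :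
    x * (s - 1) + p * (x - 1) ≤ (s + p - 1) * x := by
  obtain ⟨s', rfl⟩ : ∃ s', s = s' + 1 := ⟨s - 1, by omega⟩
  obtain ⟨x', rfl⟩ : ∃ x', x = x' + 1 := ⟨x - 1, by omega⟩
  simp only [Nat.add_sub_cancel]
  have : s' + 1 + p - 1 = s' + p := by omega
  rw [this]
  nlinarith

/-- Total keys below a threshold `T`, bounded via samples below `T`. -/
private lemma keys_lt_bound {p s x : ℕ} (hx : 0 < x) {α : Type*} [LinearOrder α]
    (K : Fin p → Fin (s * x) → α) (hK : ∀ k, Monotone (K k)) (T : α) :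
    (Finset.univ.filter fun kq : Fin p × Fin (s * x) => K kq.1 kq.2 < T).card ≤
      x * (Finset.univ.filter
        fun kj : Fin p × Fin s =>
          K kj.1 ⟨((kj.2 : ℕ) + 1) * x - 1, pos_lt hx kj.2⟩ < T).card + p * (x - 1) := by
  rw [card_filter_prod (fun k q => K k q < T),
    card_filter_prod (fun k j => K k ⟨((j : ℕ) + 1) * x - 1, pos_lt hx j⟩ < T)]
  calc ∑ k, (Finset.univ.filter fun q => K k q < T).card
      ≤ ∑ k, (x * (Finset.univ.filter
            fun j : Fin s => K k ⟨((j : ℕ) + 1) * x - 1, pos_lt hx j⟩ < T).card + (x - 1)) :=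
        Finset.sum_le_sum fun k _ => count_lt_le hx (K k) (hK k) T
    _ = x * (∑ k, (Finset.univ.filter
            fun j : Fin s => K k ⟨((j : ℕ) + 1) * x - 1, pos_lt hx j⟩ < T).card) + p * (x - 1) := by
        rw [Finset.sum_add_distrib, Finset.mul_sum, Finset.sum_const, Finset.card_univ,
          Fintype.card_fin, smul_eq_mul]

/-- Total keys at most a threshold `T`, bounded below via samples at most `T`. -/
private lemma keys_le_bound {p s x : ℕ} (hx : 0 < x) {α : Type*} [LinearOrder α]
    (K : Fin p → Fin (s * x) → α) (hK : ∀ k, Monotone (K k)) (T : α) :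
    x * (Finset.univ.filter
        fun kj : Fin p × Fin s =>
          K kj.1 ⟨((kj.2 : ℕ) + 1) * x - 1, pos_lt hx kj.2⟩ ≤ T).card ≤
      (Finset.univ.filter fun kq : Fin p × Fin (s * x) => K kq.1 kq.2 ≤ T).card := by
  rw [card_filter_prod (fun k q => K k q ≤ T),
    card_filter_prod (fun k j => K k ⟨((j : ℕ) + 1) * x - 1, pos_lt hx j⟩ ≤ T),
    Finset.mul_sum]
  exact Finset.sum_le_sum fun k _ => count_le_ge hx (K k) (hK k) T

section main

variable {p s x : ℕ} {α : Type*} [LinearOrder α]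

private lemma below_bound (hx : 0 < x)
    (K : Fin p → Fin (s * x) → α) (hK : ∀ k, Monotone (K k))
    (t : Fin (p * s) → α) (ht : Monotone t)
    (hsample : (↑(List.ofFn t) : Multiset α) =
      Multiset.map (fun kj : Fin p × Fin s =>
        K kj.1 ⟨((kj.2 : ℕ) + 1) * x - 1, pos_lt hx kj.2⟩) Finset.univ.val)
    (I : Fin (p * s)) :
    (Finset.univ.filter fun kq : Fin p × Fin (s * x) => K kq.1 kq.2 < t I).card ≤
      x * (I : ℕ) + p * (x - 1) := by
  refine le_trans (keys_lt_bound hx K hK (t I)) ?_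
  have h1 := count_sample_eq t
      (fun kj : Fin p × Fin s => K kj.1 ⟨((kj.2 : ℕ) + 1) * x - 1, pos_lt hx kj.2⟩) hsample
      (fun a => a < t I)
  have h2 := count_t_lt t ht I
  exact Nat.add_le_add_right (Nat.mul_le_mul_left x (h1 ▸ h2)) _

private lemma atmost_bound (hx : 0 < x)
    (K : Fin p → Fin (s * x) → α) (hK : ∀ k, Monotone (K k))
    (t : Fin (p * s) → α) (ht : Monotone t)
    (hsample : (↑(List.ofFn t) : Multiset α) =
      Multiset.map (fun kj : Fin p × Fin s =>
        K kj.1 ⟨((kj.2 : ℕ) + 1) * x - 1, pos_lt hx kj.2⟩) Finset.univ.val)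
    (I : Fin (p * s)) :
    x * ((I : ℕ) + 1) ≤
      (Finset.univ.filter fun kq : Fin p × Fin (s * x) => K kq.1 kq.2 ≤ t I).card := by
  refine le_trans ?_ (keys_le_bound hx K hK (t I))
  have h1 := count_sample_eq t
      (fun kj : Fin p × Fin s => K kj.1 ⟨((kj.2 : ℕ) + 1) * x - 1, pos_lt hx kj.2⟩) hsample
      (fun a => a ≤ t I)
  have h2 := count_t_le t ht I
  exact Nat.mul_le_mul_left x (h1 ▸ h2)

end main

/-- In the regular oversampling setup with `p ≥ 2`, each of the
`p` buckets induced by the `p - 1` splitters `t_s, t_{2s}, …, t_{(p-1)s}`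
contains at most `(s + p - 1) * x` keys. -/
theorem stmt_2
    (p s x : ℕ) (hp : 2 ≤ p) (hs : 0 < s) (hx : 0 < x)
    (α : Type*) [LinearOrder α]
    (K : Fin p → Fin (s * x) → α)
    (hK : ∀ k : Fin p, Monotone (K k))
    (t : Fin (p * s) → α)
    (ht : Monotone t)
    (hsample :
      (↑(List.ofFn t) : Multiset α) =
        Multiset.map
          (fun kj : Fin p × Fin s =>
            K kj.1
              ⟨((kj.2 : ℕ) + 1) * x - 1,
                idx_lt (Nat.mul_pos (Nat.succ_pos _) hx)
                  (Nat.mul_le_mul kj.2.isLt (le_refl x))⟩)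
          Finset.univ.val) :
    (Finset.univ.filter
        (fun kq : Fin p × Fin (s * x) =>
          K kq.1 kq.2 <
            t ⟨s - 1,
              idx_lt hs (le_mul_of_one_le_left (Nat.zero_le s) (by omega))⟩)).card ≤
        (s + p - 1) * x ∧
    (∀ j : ℕ, ∀ (hj1 : 1 ≤ j) (hj2 : j ≤ p - 2),
      (Finset.univ.filter
          (fun kq : Fin p × Fin (s * x) =>
            t ⟨j * s - 1,
                idx_lt (Nat.mul_pos hj1 hs)
                  (Nat.mul_le_mul (by omega) (le_refl s))⟩ <
              K kq.1 kq.2 ∧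
            K kq.1 kq.2 <
              t ⟨(j + 1) * s - 1,
                idx_lt (Nat.mul_pos (Nat.succ_pos j) hs)
                  (Nat.mul_le_mul (by omega) (le_refl s))⟩)).card ≤
        (s + p - 1) * x) ∧
    (Finset.univ.filter
        (fun kq : Fin p × Fin (s * x) =>
          t ⟨(p - 1) * s - 1,
              idx_lt (Nat.mul_pos (by omega) hs)
                (Nat.mul_le_mul (Nat.sub_le p 1) (le_refl s))⟩ <
            K kq.1 kq.2)).card ≤
      (s + p - 1) * x := by
  have hsample' : (↑(List.ofFn t) : Multiset α) =
      Multiset.map (fun kj : Fin p × Fin s =>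
        K kj.1 ⟨((kj.2 : ℕ) + 1) * x - 1, pos_lt hx kj.2⟩) Finset.univ.val := hsample
  refine ⟨?_, ?_, ?_⟩
  · -- lowest bucket
    refine le_trans (below_bound hx K hK t ht hsample' _) ?_
    exact le_trans (by simp) (final_bound hp hs hx)
  · -- middle buckets
    intro j hj1 hj2
    set I1 : Fin (p * s) := ⟨j * s - 1,
      idx_lt (Nat.mul_pos hj1 hs) (Nat.mul_le_mul (by omega) (le_refl s))⟩ with hI1
    set I2 : Fin (p * s) := ⟨(j + 1) * s - 1,
      idx_lt (Nat.mul_pos (Nat.succ_pos j) hs) (Nat.mul_le_mul (by omega) (le_refl s))⟩ with hI2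
    have hI12 : I1 ≤ I2 := by
      rw [hI1, hI2, Fin.mk_le_mk]
      have : (j + 1) * s = j * s + s := by ring
      omega
    have hT : t I1 ≤ t I2 := ht hI12
    rcases eq_or_lt_of_le hT with heq | hlt
    · have hempty : (Finset.univ.filter
          (fun kq : Fin p × Fin (s * x) => t I1 < K kq.1 kq.2 ∧ K kq.1 kq.2 < t I2)) = ∅ := by
        rw [Finset.filter_eq_empty_iff]
        rintro kq - ⟨h1, h2⟩
        exact absurd (h1.trans h2) (by rw [heq]; exact lt_irrefl _)
      rw [hempty]
      simp
    · set B := Finset.univ.filter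
        (fun kq : Fin p × Fin (s * x) => t I1 < K kq.1 kq.2 ∧ K kq.1 kq.2 < t I2) with hB
      set L := Finset.univ.filter
        (fun kq : Fin p × Fin (s * x) => K kq.1 kq.2 ≤ t I1) with hL
      set U := Finset.univ.filter
        (fun kq : Fin p × Fin (s * x) => K kq.1 kq.2 < t I2) with hU
      have hdisj : Disjoint B L := by
        rw [Finset.disjoint_left]
        intro a ha hb
        rw [hB, Finset.mem_filter] at ha
        rw [hL, Finset.mem_filter] at hb
        exact absurd hb.2 (not_le.mpr ha.2.1)
      have hunion : B ∪ L ⊆ U := by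
        intro a ha
        rcases Finset.mem_union.mp ha with h | h
        · rw [hB, Finset.mem_filter] at h
          rw [hU, Finset.mem_filter]
          exact ⟨h.1, h.2.2⟩
        · rw [hL, Finset.mem_filter] at h
          rw [hU, Finset.mem_filter]
          exact ⟨h.1, lt_of_le_of_lt h.2 hlt⟩
      have hcards : B.card + L.card ≤ U.card := by
        rw [← Finset.card_union_of_disjoint hdisj]
        exact Finset.card_le_card hunion
      have hLT2 : U.card ≤ x * ((j + 1) * s - 1) + p * (x - 1) :=
        below_bound hx K hK t ht hsample' I2
      have hLE1 : x * (j * s - 1 + 1) ≤ L.card :=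
        atmost_bound hx K hK t ht hsample' I1
      have hjs : 1 ≤ j * s := Nat.mul_pos hj1 hs
      have hv1 : j * s - 1 + 1 = j * s := by omega
      rw [hv1] at hLE1
      have e : (j + 1) * s - 1 = j * s + (s - 1) := by
        have : (j + 1) * s = j * s + s := by ring
        omega
      rw [e, Nat.mul_add] at hLT2
      have hfin : B.card ≤ x * (s - 1) + p * (x - 1) := by omega
      exact le_trans hfin (final_bound hp hs hx)
  · -- top bucket
    set I3 : Fin (p * s) := ⟨(p - 1) * s - 1,
      idx_lt (Nat.mul_pos (by omega) hs) (Nat.mul_le_mul (Nat.sub_le p 1) (le_refl s))⟩ with hI3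
    have hLE := atmost_bound hx K hK t ht hsample' I3
    have hps : 1 ≤ (p - 1) * s := Nat.mul_pos (by omega) hs
    have hv : ((I3 : ℕ)) + 1 = (p - 1) * s := by
      rw [hI3]
      simp only []
      omega
    rw [hv] at hLE
    have hsplit := Finset.card_filter_add_card_filter_not
      (s := (Finset.univ : Finset (Fin p × Fin (s * x))))
      (p := fun kq => K kq.1 kq.2 ≤ t I3)
    have hco : (Finset.univ.filter fun kq : Fin p × Fin (s * x) => ¬ K kq.1 kq.2 ≤ t I3)
        = Finset.univ.filter fun kq : Fin p × Fin (s * x) => t I3 < K kq.1 kq.2 := by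
      exact Finset.filter_congr fun kq _ => not_le
    rw [hco] at hsplit
    have hcardU : (Finset.univ : Finset (Fin p × Fin (s * x))).card = p * (s * x) := by
      simp
    rw [hcardU] at hsplit
    obtain ⟨p', rfl⟩ : ∃ p', p = p' + 1 := ⟨p - 1, by omega⟩
    have he : (p' + 1) * (s * x) = x * ((p' + 1 - 1) * s) + s * x := by
      simp only [Nat.add_sub_cancel]
      ring
    have hsx : s * x ≤ (s + (p' + 1) - 1) * x := Nat.mul_le_mul_right x (by omega)
    omega
end

section
/- If additionally n and r are positive integers, s = r·p, and x = ⌈⌈n/p⌉/s⌉, then each of the p buckets induced by the p−1 splitters contains at most (1 + 1/r)·(n + p·s)/p keys (as a bound in the rationals on the natural-number bucket size). Explicitly, each of the cardinalities |{(k,q) : K k q < t_s}|, |{(k,q) : t_{j·s} < K k q < t_{(j+1)·s}}| for 1 ≤ j ≤ p−2, and |{(k,q) : K k q > t_{(p−1)·s}}| is at most (1 + 1/r)·(n + p·s)/p. -/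
private lemma count_lt' {s : ℕ} {d : ℕ} (hd : d ≤ s) :
    (Finset.univ.filter fun a : Fin s => (a : ℕ) < d).card = d := by
  rcases eq_or_lt_of_le hd with heq | h
  · subst heq
    have he : (Finset.univ.filter fun a : Fin d => (a : ℕ) < d) = Finset.univ := by
      apply Finset.filter_true_of_mem; intro a _; exact a.isLt
    simp [he]
  · have he : (Finset.univ.filter fun a : Fin s => (a : ℕ) < d) = Finset.Iio ⟨d, h⟩ := by
      ext a; simp [Fin.lt_def]
    rw [he, Fin.card_Iio]

private lemma lower_char {α : Type*} [LinearOrder α] {N : ℕ} (f : Fin N → α)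
    (hf : Monotone f) (P : α → Prop) [DecidablePred P]
    (hP : ∀ a b : α, a ≤ b → P b → P a) (q : Fin N) :
    P (f q) ↔ (q : ℕ) < (Finset.univ.filter fun i => P (f i)).card := by
  constructor
  · intro h
    have hsub : Finset.Iic q ⊆ Finset.univ.filter fun i => P (f i) := by
      intro j hj
      simp only [Finset.mem_Iic] at hj
      simp only [Finset.mem_filter, Finset.mem_univ, true_and]
      exact hP _ _ (hf hj) h
    have := Finset.card_le_card hsub
    rw [Fin.card_Iic] at this
    omega
  · intro h
    by_contra hq
    have hsub : (Finset.univ.filter fun i => P (f i)) ⊆ Finset.Iio q := by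
      intro j hj
      simp only [Finset.mem_filter, Finset.mem_univ, true_and] at hj
      simp only [Finset.mem_Iio]
      by_contra hjq
      exact hq (hP _ _ (hf (le_of_not_gt hjq)) hj)
    have := Finset.card_le_card hsub
    rw [Fin.card_Iio] at this
    omega

private lemma prod_card_split {p N : ℕ} (P : Fin p → Fin N → Prop)
    [∀ k q, Decidable (P k q)] :
    (Finset.univ.filter fun kq : Fin p × Fin N => P kq.1 kq.2).card
      = ∑ k : Fin p, (Finset.univ.filter fun q : Fin N => P k q).card := by
  rw [Finset.card_filter, Fintype.sum_prod_type]
  exact Finset.sum_congr rfl fun k _ => (Finset.card_filter _ _).symm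

private lemma sample_count {α : Type*} [LinearOrder α] {p s x M : ℕ} (hx : 0 < x)
    (K : Fin p → Fin (s * x) → α) (hK : ∀ k, Monotone (K k))
    (t : Fin M → α) (g : Fin p × Fin s → Fin (s * x))
    (hg : ∀ kj, (g kj : ℕ) = ((kj.2 : ℕ) + 1) * x - 1)
    (hsample : (↑(List.ofFn t) : Multiset α) =
      Multiset.map (fun kj => K kj.1 (g kj)) Finset.univ.val)
    (P : α → Prop) [DecidablePred P] (hP : ∀ a b : α, a ≤ b → P b → P a) :
    ∑ k : Fin p, (Finset.univ.filter fun q : Fin (s * x) => P (K k q)).card / x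
      = (Finset.univ.filter fun i : Fin M => P (t i)).card := by
  have step1 : ∀ k : Fin p,
      (Finset.univ.filter fun a : Fin s => P (K k (g (k, a)))).card
        = (Finset.univ.filter fun q : Fin (s * x) => P (K k q)).card / x := by
    intro k
    set c := (Finset.univ.filter fun q : Fin (s * x) => P (K k q)).card with hc
    have hchar := lower_char (K k) (hK k) P hP
    have hcle : c ≤ s * x := by
      rw [hc]
      exact (Finset.card_filter_le _ _).trans (by simp)
    have hdiv : c / x ≤ s := by
      calc c / x ≤ (s * x) / x := Nat.div_le_div_right hcle
        _ = s := Nat.mul_div_cancel s hx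
    have key : ∀ a : Fin s, P (K k (g (k, a))) ↔ (a : ℕ) < c / x := by
      intro a
      rw [hchar (g (k, a)), ← hc, hg]
      show ((a : ℕ) + 1) * x - 1 < c ↔ (a : ℕ) < c / x
      have h0 : 0 < ((a : ℕ) + 1) * x := Nat.mul_pos (Nat.succ_pos _) hx
      have h2 : ((a : ℕ) + 1) * x ≤ c ↔ (a : ℕ) + 1 ≤ c / x :=
        (Nat.le_div_iff_mul_le hx).symm
      obtain ⟨y, hy⟩ : ∃ y, ((a : ℕ) + 1) * x = y := ⟨_, rfl⟩
      obtain ⟨z, hz⟩ : ∃ z, c / x = z := ⟨_, rfl⟩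
      rw [hy] at h0 h2 ⊢
      rw [hz] at h2 ⊢
      omega
    have hfe : (Finset.univ.filter fun a : Fin s => P (K k (g (k, a))))
        = Finset.univ.filter fun a : Fin s => (a : ℕ) < c / x :=
      Finset.filter_congr fun a _ => by rw [key a]
    rw [hfe, count_lt' hdiv]
  have step2 : (Finset.univ.filter fun kj : Fin p × Fin s => P (K kj.1 (g kj))).card
      = ∑ k : Fin p, (Finset.univ.filter fun a : Fin s => P (K k (g (k, a)))).card := by
    have := prod_card_split (fun (k : Fin p) (a : Fin s) => P (K k (g (k, a))))
    simpa using this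
  have hlist : (↑(List.ofFn t) : Multiset α) = Multiset.map t Finset.univ.val := by
    rw [List.ofFn_eq_map]
    rfl
  have hmain : Multiset.map t Finset.univ.val
      = Multiset.map (fun kj => K kj.1 (g kj)) Finset.univ.val := by
    rw [← hlist]; exact hsample
  have e1 : (Finset.univ.filter fun i : Fin M => P (t i)).card
      = Multiset.countP P (Multiset.map t Finset.univ.val) := by
    rw [Multiset.countP_map]; rfl
  have e2 : (Finset.univ.filter fun kj : Fin p × Fin s => P (K kj.1 (g kj))).card
      = Multiset.countP P (Multiset.map (fun kj => K kj.1 (g kj)) Finset.univ.val) := by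
    rw [Multiset.countP_map]; rfl
  calc ∑ k : Fin p, (Finset.univ.filter fun q : Fin (s * x) => P (K k q)).card / x
      = ∑ k : Fin p, (Finset.univ.filter fun a : Fin s => P (K k (g (k, a)))).card := by
        exact Finset.sum_congr rfl fun k _ => (step1 k).symm
    _ = (Finset.univ.filter fun kj : Fin p × Fin s => P (K kj.1 (g kj))).card := step2.symm
    _ = Multiset.countP P (Multiset.map (fun kj => K kj.1 (g kj)) Finset.univ.val) := e2
    _ = Multiset.countP P (Multiset.map t Finset.univ.val) := by rw [hmain]
    _ = (Finset.univ.filter fun i : Fin M => P (t i)).card := e1.symm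

private lemma tcount_lt {α : Type*} [LinearOrder α] {M : ℕ} (t : Fin M → α)
    (ht : Monotone t) (I : Fin M) :
    (Finset.univ.filter fun i => t i < t I).card ≤ (I : ℕ) := by
  have hsub : (Finset.univ.filter fun i => t i < t I)
      ⊆ Finset.univ.filter fun i : Fin M => (i : ℕ) < (I : ℕ) := by
    intro i hi
    simp only [Finset.mem_filter, Finset.mem_univ, true_and] at hi ⊢
    by_contra h
    push_neg at h
    exact absurd hi (not_lt.2 (ht (show I ≤ i from h)))
  have := Finset.card_le_card hsub
  rwa [count_lt' (le_of_lt I.isLt)] at this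

private lemma tcount_le {α : Type*} [LinearOrder α] {M : ℕ} (t : Fin M → α)
    (ht : Monotone t) (I : Fin M) :
    (I : ℕ) + 1 ≤ (Finset.univ.filter fun i => t i ≤ t I).card := by
  have hsub : (Finset.univ.filter fun i : Fin M => (i : ℕ) < (I : ℕ) + 1)
      ⊆ Finset.univ.filter fun i => t i ≤ t I := by
    intro i hi
    simp only [Finset.mem_filter, Finset.mem_univ, true_and] at hi ⊢
    exact ht (show i ≤ I from by omega)
  have := Finset.card_le_card hsub
  rwa [count_lt' I.isLt] at this

private lemma padded_bound (p s x n : ℕ) (hp : 0 < p) (hs : 0 < s)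
    (hxdef : (x : ℤ) = ⌈((⌈(n : ℚ) / (p : ℚ)⌉ : ℤ) : ℚ) / (s : ℚ)⌉) :
    p * (s * x) ≤ n + p * s := by
  set C : ℤ := ⌈(n : ℚ) / (p : ℚ)⌉ with hC
  have hp' : (0 : ℚ) < p := by exact_mod_cast hp
  have hs' : (0 : ℚ) < s := by exact_mod_cast hs
  have h1 : (C : ℚ) < (n : ℚ) / p + 1 := Int.ceil_lt_add_one _
  have h2 : ((x : ℤ) : ℚ) < (C : ℚ) / s + 1 := by
    rw [hxdef]; exact_mod_cast Int.ceil_lt_add_one _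
  have h1' : (C : ℚ) * p < (n : ℚ) + p := by
    have := mul_lt_mul_of_pos_right h1 hp'
    rwa [add_mul, div_mul_cancel₀ _ (ne_of_gt hp'), one_mul] at this
  have h2' : ((x : ℤ) : ℚ) * s < (C : ℚ) + s := by
    have := mul_lt_mul_of_pos_right h2 hs'
    rwa [add_mul, div_mul_cancel₀ _ (ne_of_gt hs'), one_mul] at this
  have h1z : C * p < (n : ℤ) + p := by exact_mod_cast h1'
  have h2z : (x : ℤ) * s < C + s := by exact_mod_cast h2'
  have hpz : (1 : ℤ) ≤ p := by exact_mod_cast hp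
  have goal : (p : ℤ) * (s * x) ≤ (n : ℤ) + p * s := by
    have hxs : (x : ℤ) * s ≤ C + s - 1 := by omega
    have hmul : (p : ℤ) * ((x : ℤ) * s) ≤ (p : ℤ) * (C + s - 1) :=
      mul_le_mul_of_nonneg_left hxs (by omega)
    nlinarith [hmul, h1z, hpz]
  exact_mod_cast goal

private lemma bucket_final (p s x n r m : ℕ) (hp : 0 < p) (hr : 0 < r) (hsr : s = r * p)
    (hPb : p * (s * x) ≤ n + p * s) (hm : m ≤ s * x + p * x) :
    (m : ℚ) ≤ (1 + 1 / (r : ℚ)) * (((n : ℚ) + (p : ℚ) * (s : ℚ)) / (p : ℚ)) := by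
  subst hsr
  have hp' : (0 : ℚ) < p := by exact_mod_cast hp
  have hr' : (0 : ℚ) < r := by exact_mod_cast hr
  have hP' : (p : ℚ) * (((r : ℚ) * p) * x) ≤ (n : ℚ) + p * ((r : ℚ) * p) := by
    exact_mod_cast hPb
  have hm' : (m : ℚ) ≤ ((r : ℚ) * p) * x + (p : ℚ) * x := by exact_mod_cast hm
  have key : (1 + 1 / (r : ℚ)) * (((n : ℚ) + (p : ℚ) * (((r : ℕ) * p : ℕ) : ℚ)) / (p : ℚ))
      = (((r : ℚ) + 1) * ((n : ℚ) + (p : ℚ) * ((r : ℚ) * p))) / ((r : ℚ) * p) := by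
    push_cast
    field_simp
  rw [key, le_div_iff₀ (by positivity)]
  have h1 : (m : ℚ) * ((r : ℚ) * p) ≤ (((r : ℚ) * p) * x + (p : ℚ) * x) * ((r : ℚ) * p) :=
    mul_le_mul_of_nonneg_right hm' (le_of_lt (mul_pos hr' hp'))
  have h2 : ((r : ℚ) + 1) * ((p : ℚ) * (((r : ℚ) * p) * x))
      ≤ ((r : ℚ) + 1) * ((n : ℚ) + p * ((r : ℚ) * p)) :=
    mul_le_mul_of_nonneg_left hP' (by linarith)
  have hid : (((r : ℚ) * p) * x + (p : ℚ) * x) * ((r : ℚ) * p)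
      = ((r : ℚ) + 1) * ((p : ℚ) * (((r : ℚ) * p) * x)) := by ring
  linarith

private lemma sum_upper' {p x : ℕ} (hx : 0 < x) (c : Fin p → ℕ) :
    (∑ k, c k) ≤ x * (∑ k, c k / x) + p * (x - 1) := by
  calc (∑ k, c k) ≤ ∑ k, (x * (c k / x) + (x - 1)) := by
        refine Finset.sum_le_sum fun k _ => ?_
        have h1 : x * (c k / x) + c k % x = c k := Nat.div_add_mod (c k) x
        have h2 : c k % x ≤ x - 1 := Nat.le_sub_one_of_lt (Nat.mod_lt _ hx)
        calc c k = x * (c k / x) + c k % x := h1.symm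
          _ ≤ x * (c k / x) + (x - 1) := Nat.add_le_add_left h2 _
    _ = x * (∑ k, c k / x) + p * (x - 1) := by
        rw [Finset.sum_add_distrib, ← Finset.mul_sum, Finset.sum_const,
          Finset.card_univ, Fintype.card_fin, smul_eq_mul]

private lemma sum_lower' {p x : ℕ} (c : Fin p → ℕ) :
    x * (∑ k, c k / x) ≤ ∑ k, c k := by
  rw [Finset.mul_sum]
  refine Finset.sum_le_sum fun k _ => ?_
  rw [mul_comm]
  exact Nat.div_mul_le_self _ _

private lemma bucketA {α : Type*} [LinearOrder α] {p s x : ℕ} (hx : 0 < x)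
    (K : Fin p → Fin (s * x) → α) (τ : α)
    (h : ∑ k : Fin p,
        (Finset.univ.filter fun q : Fin (s * x) => K k q < τ).card / x ≤ s - 1) :
    (Finset.univ.filter fun kq : Fin p × Fin (s * x) => K kq.1 kq.2 < τ).card
      ≤ s * x + p * x := by
  rw [prod_card_split (fun k q => K k q < τ)]
  have h1 := sum_upper' hx (fun k => (Finset.univ.filter fun q : Fin (s * x) => K k q < τ).card)
  have h2 : x * (∑ k : Fin p,
      (Finset.univ.filter fun q : Fin (s * x) => K k q < τ).card / x) ≤ x * (s - 1) :=
    Nat.mul_le_mul_left x h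
  have h3 : x * (s - 1) ≤ s * x := by
    rw [mul_comm]
    exact Nat.mul_le_mul_right x (Nat.sub_le s 1)
  have h4 : p * (x - 1) ≤ p * x := Nat.mul_le_mul_left p (Nat.sub_le x 1)
  linarith

private lemma bucketB {α : Type*} [LinearOrder α] {p s x : ℕ} (hx : 0 < x)
    (K : Fin p → Fin (s * x) → α) (τ₁ τ₂ : α) (hτ : τ₁ < τ₂) (J : ℕ)
    (hU : J ≤ ∑ k : Fin p,
        (Finset.univ.filter fun q : Fin (s * x) => K k q ≤ τ₁).card / x)
    (hC : ∑ k : Fin p,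
        (Finset.univ.filter fun q : Fin (s * x) => K k q < τ₂).card / x ≤ J + (s - 1)) :
    (Finset.univ.filter fun kq : Fin p × Fin (s * x) =>
        τ₁ < K kq.1 kq.2 ∧ K kq.1 kq.2 < τ₂).card ≤ s * x + p * x := by
  rw [prod_card_split (fun k q => τ₁ < K k q ∧ K k q < τ₂)]
  set c : Fin p → ℕ := fun k => (Finset.univ.filter fun q : Fin (s * x) => K k q < τ₂).card
    with hcdef
  set u : Fin p → ℕ := fun k => (Finset.univ.filter fun q : Fin (s * x) => K k q ≤ τ₁).card
    with hudef
  have hsub : ∀ k : Fin p, (Finset.univ.filter fun q : Fin (s * x) => K k q ≤ τ₁)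
      ⊆ Finset.univ.filter fun q : Fin (s * x) => K k q < τ₂ := by
    intro k q hq
    simp only [Finset.mem_filter, Finset.mem_univ, true_and] at hq ⊢
    exact lt_of_le_of_lt hq hτ
  have hbk : ∀ k : Fin p,
      (Finset.univ.filter fun q : Fin (s * x) => τ₁ < K k q ∧ K k q < τ₂).card
        + u k = c k := by
    intro k
    have he : (Finset.univ.filter fun q : Fin (s * x) => τ₁ < K k q ∧ K k q < τ₂)
        = (Finset.univ.filter fun q : Fin (s * x) => K k q < τ₂)
          \ (Finset.univ.filter fun q : Fin (s * x) => K k q ≤ τ₁) := by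
      ext q
      simp only [Finset.mem_filter, Finset.mem_univ, true_and, Finset.mem_sdiff, not_le]
      tauto
    rw [he, Finset.card_sdiff_of_subset (hsub k)]
    exact Nat.sub_add_cancel (Finset.card_le_card (hsub k))
  have hsum : (∑ k : Fin p,
      (Finset.univ.filter fun q : Fin (s * x) => τ₁ < K k q ∧ K k q < τ₂).card)
      + (∑ k, u k) = ∑ k, c k := by
    rw [← Finset.sum_add_distrib]
    exact Finset.sum_congr rfl fun k _ => hbk k
  have h2 : (∑ k, c k) ≤ x * (J + (s - 1)) + p * (x - 1) :=
    (sum_upper' hx c).trans (Nat.add_le_add_right (Nat.mul_le_mul_left x hC) _)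
  have h3 : x * J ≤ ∑ k, u k :=
    le_trans (Nat.mul_le_mul_left x hU) (sum_lower' u)
  have h4 : x * (J + (s - 1)) = x * J + x * (s - 1) := Nat.mul_add x J (s - 1)
  have h5 : x * (s - 1) ≤ s * x := by
    rw [mul_comm]; exact Nat.mul_le_mul_right x (Nat.sub_le s 1)
  have h6 : p * (x - 1) ≤ p * x := Nat.mul_le_mul_left p (Nat.sub_le x 1)
  linarith

private lemma bucketC {α : Type*} [LinearOrder α] {p s x : ℕ} (hp : 1 ≤ p)
    (K : Fin p → Fin (s * x) → α) (τ : α)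
    (hU : (p - 1) * s ≤ ∑ k : Fin p,
        (Finset.univ.filter fun q : Fin (s * x) => K k q ≤ τ).card / x) :
    (Finset.univ.filter fun kq : Fin p × Fin (s * x) => τ < K kq.1 kq.2).card
      ≤ s * x + p * x := by
  rw [prod_card_split (fun k q => τ < K k q)]
  set u : Fin p → ℕ := fun k => (Finset.univ.filter fun q : Fin (s * x) => K k q ≤ τ).card
    with hudef
  have hbk : ∀ k : Fin p,
      (Finset.univ.filter fun q : Fin (s * x) => τ < K k q).card + u k = s * x := by
    intro k
    have he : (Finset.univ.filter fun q : Fin (s * x) => τ < K k q)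
        = Finset.univ \ (Finset.univ.filter fun q : Fin (s * x) => K k q ≤ τ) := by
      ext q
      simp only [Finset.mem_filter, Finset.mem_univ, true_and, Finset.mem_sdiff, not_le]
    rw [he, Finset.card_sdiff_of_subset (Finset.filter_subset _ _)]
    have hu : u k ≤ s * x := by
      simpa using Finset.card_filter_le Finset.univ
        (fun q : Fin (s * x) => K k q ≤ τ)
    rw [Finset.card_univ, Fintype.card_fin]
    exact Nat.sub_add_cancel hu
  have hsum : (∑ k : Fin p,
      (Finset.univ.filter fun q : Fin (s * x) => τ < K k q).card) + (∑ k, u k)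
      = p * (s * x) := by
    rw [← Finset.sum_add_distrib]
    rw [Finset.sum_congr rfl fun k _ => hbk k]
    rw [Finset.sum_const, Finset.card_univ, Fintype.card_fin, smul_eq_mul]
  have h3 : x * ((p - 1) * s) ≤ ∑ k, u k :=
    le_trans (Nat.mul_le_mul_left x hU) (sum_lower' u)
  have hid : x * ((p - 1) * s) + x * s = p * (s * x) := by
    obtain ⟨q, rfl⟩ : ∃ q, p = q + 1 := ⟨p - 1, by omega⟩
    simp only [Nat.add_sub_cancel]
    ring
  nlinarith

/-- In the regular oversampling setup with `p ≥ 2`, `s = r * p`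
and segment length `x = ⌈⌈n/p⌉/s⌉`, each of the `p` buckets induced by the
`p - 1` splitters contains at most `(1 + 1/r) * (n + p*s)/p` keys. -/
theorem stmt_3
    (p s x n r : ℕ) (hp : 2 ≤ p) (hs : 0 < s) (hx : 0 < x)
    (hn : 0 < n) (hr : 0 < r)
    (hsr : s = r * p)
    (hxdef : (x : ℤ) = ⌈((⌈(n : ℚ) / (p : ℚ)⌉ : ℤ) : ℚ) / (s : ℚ)⌉)
    (α : Type*) [LinearOrder α]
    (K : Fin p → Fin (s * x) → α)
    (hK : ∀ k : Fin p, Monotone (K k))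
    (t : Fin (p * s) → α)
    (ht : Monotone t)
    (hsample :
      (↑(List.ofFn t) : Multiset α) =
        Multiset.map
          (fun kj : Fin p × Fin s =>
            K kj.1
              ⟨((kj.2 : ℕ) + 1) * x - 1,
                idx_lt (Nat.mul_pos (Nat.succ_pos _) hx)
                  (Nat.mul_le_mul kj.2.isLt (le_refl x))⟩)
          Finset.univ.val) :
    ((Finset.univ.filter
        (fun kq : Fin p × Fin (s * x) =>
          K kq.1 kq.2 <
            t ⟨s - 1,
              idx_lt hs (le_mul_of_one_le_left (Nat.zero_le s) (by omega))⟩)).card : ℚ) ≤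
        (1 + 1 / (r : ℚ)) * (((n : ℚ) + (p : ℚ) * (s : ℚ)) / (p : ℚ)) ∧
    (∀ j : ℕ, ∀ (hj1 : 1 ≤ j) (hj2 : j ≤ p - 2),
      ((Finset.univ.filter
          (fun kq : Fin p × Fin (s * x) =>
            t ⟨j * s - 1,
                idx_lt (Nat.mul_pos hj1 hs)
                  (Nat.mul_le_mul (by omega) (le_refl s))⟩ <
              K kq.1 kq.2 ∧
            K kq.1 kq.2 <
              t ⟨(j + 1) * s - 1,
                idx_lt (Nat.mul_pos (Nat.succ_pos j) hs)
                  (Nat.mul_le_mul (by omega) (le_refl s))⟩)).card : ℚ) ≤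
        (1 + 1 / (r : ℚ)) * (((n : ℚ) + (p : ℚ) * (s : ℚ)) / (p : ℚ))) ∧
    ((Finset.univ.filter
        (fun kq : Fin p × Fin (s * x) =>
          t ⟨(p - 1) * s - 1,
              idx_lt (Nat.mul_pos (by omega) hs)
                (Nat.mul_le_mul (Nat.sub_le p 1) (le_refl s))⟩ <
            K kq.1 kq.2)).card : ℚ) ≤
      (1 + 1 / (r : ℚ)) * (((n : ℚ) + (p : ℚ) * (s : ℚ)) / (p : ℚ)) := by
  have hp0 : 0 < p := by omega
  have hPb := padded_bound p s x n hp0 hs hxdef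
  have hsc : ∀ τ : α,
      ∑ k : Fin p, (Finset.univ.filter fun q : Fin (s * x) => K k q < τ).card / x
        = (Finset.univ.filter fun i : Fin (p * s) => t i < τ).card := fun τ =>
    sample_count hx K hK t
      (fun kj => ⟨((kj.2 : ℕ) + 1) * x - 1,
        idx_lt (Nat.mul_pos (Nat.succ_pos _) hx)
          (Nat.mul_le_mul kj.2.isLt (le_refl x))⟩)
      (fun kj => rfl) hsample (fun a => a < τ)
      (fun a b hab hb => lt_of_le_of_lt hab hb)
  have hsc' : ∀ τ : α,
      ∑ k : Fin p, (Finset.univ.filter fun q : Fin (s * x) => K k q ≤ τ).card / x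
        = (Finset.univ.filter fun i : Fin (p * s) => t i ≤ τ).card := fun τ =>
    sample_count hx K hK t
      (fun kj => ⟨((kj.2 : ℕ) + 1) * x - 1,
        idx_lt (Nat.mul_pos (Nat.succ_pos _) hx)
          (Nat.mul_le_mul kj.2.isLt (le_refl x))⟩)
      (fun kj => rfl) hsample (fun a => a ≤ τ)
      (fun a b hab hb => hab.trans hb)
  refine ⟨?_, fun j hj1 hj2 => ?_, ?_⟩
  · -- first bucket
    refine bucket_final p s x n r _ hp0 hr hsr hPb ?_
    refine bucketA hx K _ ?_
    rw [hsc]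
    exact tcount_lt t ht ⟨s - 1,
      idx_lt hs (le_mul_of_one_le_left (Nat.zero_le s) (by omega))⟩
  · -- middle buckets
    have pfA : j * s - 1 < p * s :=
      idx_lt (Nat.mul_pos hj1 hs) (Nat.mul_le_mul (show j ≤ p by omega) (le_refl s))
    have pfB : (j + 1) * s - 1 < p * s :=
      idx_lt (Nat.mul_pos (Nat.succ_pos j) hs)
        (Nat.mul_le_mul (show j + 1 ≤ p by omega) (le_refl s))
    rcases lt_or_ge (t ⟨j * s - 1, pfA⟩) (t ⟨(j + 1) * s - 1, pfB⟩) with hτ | hτ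
    · refine bucket_final p s x n r _ hp0 hr hsr hPb ?_
      refine bucketB hx K _ _ hτ (j * s) ?_ ?_
      · rw [hsc']
        have h := tcount_le t ht ⟨j * s - 1, pfA⟩
        have hpos : 0 < j * s := Nat.mul_pos hj1 hs
        exact le_trans (le_of_eq (Nat.sub_add_cancel hpos).symm) h
      · rw [hsc]
        have h := tcount_lt t ht ⟨(j + 1) * s - 1, pfB⟩
        refine h.trans ?_
        show (j + 1) * s - 1 ≤ j * s + (s - 1)
        have e : (j + 1) * s = j * s + s := by ring
        obtain ⟨A, hA⟩ : ∃ A, j * s = A := ⟨_, rfl⟩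
        rw [e, hA]
        omega
    · have hemp : (Finset.univ.filter
          (fun kq : Fin p × Fin (s * x) =>
            t ⟨j * s - 1,
                idx_lt (Nat.mul_pos hj1 hs)
                  (Nat.mul_le_mul (by omega) (le_refl s))⟩ <
              K kq.1 kq.2 ∧
            K kq.1 kq.2 <
              t ⟨(j + 1) * s - 1,
                idx_lt (Nat.mul_pos (Nat.succ_pos j) hs)
                  (Nat.mul_le_mul (by omega) (le_refl s))⟩)) = ∅ := by
        refine Finset.filter_false_of_mem fun kq _ => ?_
        rintro ⟨h1, h2⟩
        exact absurd (h1.trans h2) (not_lt.2 hτ)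
      rw [hemp]
      simp only [Finset.card_empty, Nat.cast_zero]
      positivity
  · -- last bucket
    refine bucket_final p s x n r _ hp0 hr hsr hPb ?_
    refine bucketC (by omega) K _ ?_
    rw [hsc']
    have h := tcount_le t ht ⟨(p - 1) * s - 1,
      idx_lt (Nat.mul_pos (by omega) hs) (Nat.mul_le_mul (Nat.sub_le p 1) (le_refl s))⟩
    have hpos : 0 < (p - 1) * s := Nat.mul_pos (by omega) hs
    exact le_trans (le_of_eq (Nat.sub_add_cancel hpos).symm) h
end
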